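/- For all real numbers x and y, exp(−(x−y)²/2) = Σ_{β=0}^∞ (y^β/β!) · ( Σ_{α=0}^∞ ((−x)^α/α!) · He_{α+β}(0) ), where for each β the inner series converges absolutely and the outer series converges absolutely. (Polynomial/Vandermonde double expansion of the flat Gaussian RBF kernel.) -/

import Mathlib

/-- Probabilists' Hermite polynomials evaluated over ℝ. -/
noncomputable def He (n : ℕ) (x : ℝ) : ℝ := Polynomial.aeval x (Polynomial.hermite n)

/-!
Since `He_n(0)` vanishes for odd `n` and `He_{2m}(0) = (-1)^m (2m-1)‼ = (-1)^m (2m)! / (2^m m!)`,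
the Taylor series `∑ He_n(0) uⁿ / n!` is the exponential series of `-u²/2`, and
`∑ |He_n(0)| rⁿ / n!` that of `r²/2`. Expanding `uⁿ = (y - x)ⁿ` binomially splits the first
series into the double series of the theorem, which the second series (at `r = |x| + |y|`)
shows to be absolutely convergent, so it may be summed fiberwise.
-/

open Polynomial Finset
open scoped Nat

theorem Nat.factorial_two_mul_eq_doubleFactorial_mul (m : ℕ) :
    (2 * m)! = (2 * m - 1)‼ * (2 ^ m * m !) := by
  cases m with
  | zero => rfl
  | succ k =>
    rw [← Nat.doubleFactorial_two_mul, show 2 * (k + 1) = 2 * k + 1 + 1 by ring,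
      Nat.factorial_eq_mul_doubleFactorial, Nat.add_sub_cancel, mul_comm]

theorem HasSum.sum_antidiagonal {M A : Type*} [AddCommMonoid M] [TopologicalSpace M]
    [ContinuousAdd M] [RegularSpace M] [AddCommMonoid A] [HasAntidiagonal A]
    {f : A × A → M} {s : M} (hf : HasSum f s) :
    HasSum (fun n ↦ ∑ p ∈ antidiagonal n, f p) s := by
  refine (HasAntidiagonal.sigmaAntidiagonalEquivProd.hasSum_iff.mpr hf).sigma fun n ↦ ?_
  rw [← sum_coe_sort]
  exact hasSum_fintype _

theorem summable_of_nonneg_of_summable_sum_antidiagonal {A : Type*} [AddCommMonoid A]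
    [HasAntidiagonal A] {f : A × A → ℝ} (hf : 0 ≤ f)
    (h : Summable fun n ↦ ∑ p ∈ antidiagonal n, f p) : Summable f := by
  refine HasAntidiagonal.sigmaAntidiagonalEquivProd.summable_iff.mp ?_
  refine (summable_sigma_of_nonneg fun _ ↦ hf _).mpr ⟨fun _ ↦ .of_finite, ?_⟩
  simpa only [tsum_fintype, HasAntidiagonal.sigmaAntidiagonalEquivProd_apply, sum_coe_sort] using h

theorem summable_norm_tsum_prod {β γ E : Type*} [NormedAddCommGroup E] [CompleteSpace E]
    {f : β × γ → E} (hf : Summable fun p ↦ ‖f p‖) : Summable fun b ↦ ‖∑' c, f (b, c)‖ :=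
  hf.prod.of_nonneg_of_le (fun _ ↦ norm_nonneg _)
    fun b ↦ norm_tsum_le_tsum_norm (hf.prod_factor b)

theorem sum_antidiagonal_pow_div_factorial_mul {K : Type*} [Field K] [CharZero K]
    (a b : K) (n : ℕ) :
    ∑ p ∈ antidiagonal n, a ^ p.1 / p.1 ! * (b ^ p.2 / p.2 !) = (a + b) ^ n / n ! := by
  rw [(Commute.all a b).add_pow', sum_div]
  refine sum_congr rfl fun p hp ↦ ?_
  rw [← mem_antidiagonal.mp hp, nsmul_eq_mul, Nat.cast_add_choose]
  have : ((p.1 + p.2)! : K) ≠ 0 := Nat.cast_ne_zero.mpr (Nat.factorial_ne_zero _)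
  field_simp

/-- Expanding `(a + b) ^ n` binomially in `∑ n, c n * (a + b) ^ n / n!` gives this double series. -/
noncomputable def doubleTaylorTerm (c : ℕ → ℝ) (a b : ℝ) (p : ℕ × ℕ) : ℝ :=
  a ^ p.1 / p.1 ! * (b ^ p.2 / p.2 ! * c (p.2 + p.1))

theorem sum_antidiagonal_doubleTaylorTerm (c : ℕ → ℝ) (a b : ℝ) (n : ℕ) :
    ∑ p ∈ antidiagonal n, doubleTaylorTerm c a b p = c n * (a + b) ^ n / n ! := by
  rw [mul_div_assoc, ← sum_antidiagonal_pow_div_factorial_mul, mul_sum]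
  refine sum_congr rfl fun p hp ↦ ?_
  rw [doubleTaylorTerm, add_comm p.2, mem_antidiagonal.mp hp]
  ring

theorem abs_doubleTaylorTerm (c : ℕ → ℝ) (a b : ℝ) (p : ℕ × ℕ) :
    |doubleTaylorTerm c a b p| = doubleTaylorTerm (fun n ↦ |c n|) |a| |b| p := by
  simp only [doubleTaylorTerm, abs_mul, abs_div, abs_pow, Nat.abs_cast]

section DoubleTaylorTerm

variable {c : ℕ → ℝ} {a b : ℝ}

theorem summable_abs_doubleTaylorTerm (hc : Summable fun n ↦ |c n| * (|a| + |b|) ^ n / n !) :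
    Summable fun p ↦ |doubleTaylorTerm c a b p| := by
  simp only [abs_doubleTaylorTerm]
  refine summable_of_nonneg_of_summable_sum_antidiagonal (fun p ↦ ?_) ?_
  · rw [← abs_doubleTaylorTerm]
    exact abs_nonneg _
  · simpa only [sum_antidiagonal_doubleTaylorTerm] using hc

theorem hasSum_doubleTaylorTerm (hc : Summable fun n ↦ |c n| * (|a| + |b|) ^ n / n !) {s : ℝ}
    (hs : HasSum (fun n ↦ c n * (a + b) ^ n / n !) s) : HasSum (doubleTaylorTerm c a b) s := by
  have h := (summable_abs_iff.mp (summable_abs_doubleTaylorTerm hc)).hasSum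
  have h' := h.sum_antidiagonal
  simp only [sum_antidiagonal_doubleTaylorTerm] at h'
  rwa [h'.unique hs] at h

theorem summable_abs_pow_div_factorial_mul_shift
    (hc : Summable fun n ↦ |c n| * (1 + |b|) ^ n / n !) (k : ℕ) :
    Summable fun m ↦ |b ^ m / m ! * c (m + k)| := by
  rw [← abs_one] at hc
  refine (((summable_abs_doubleTaylorTerm hc).prod_factor k).mul_left (k ! : ℝ)).congr fun m ↦ ?_
  have : (k ! : ℝ) ≠ 0 := by positivity
  rw [doubleTaylorTerm, one_pow, abs_mul, ← mul_assoc, abs_div, abs_one, Nat.abs_cast]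
  field_simp

end DoubleTaylorTerm

theorem He_zero_eq_coeff (n : ℕ) : He n 0 = (hermite n).coeff 0 := by
  simp [He, aeval_def, eval₂_at_zero]

theorem He_zero_of_odd {n : ℕ} (hn : Odd n) : He n 0 = 0 := by
  rw [He_zero_eq_coeff, coeff_hermite_of_odd_add (by simpa using hn), Int.cast_zero]

theorem He_two_mul_zero_div_factorial (m : ℕ) : He (2 * m) 0 / (2 * m)! = (-1 / 2) ^ m / m ! := by
  rw [He_zero_eq_coeff, ← add_zero (2 * m), coeff_hermite_explicit, add_zero,
    Nat.choose_zero_right, Nat.factorial_two_mul_eq_doubleFactorial_mul]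
  have : ((2 * m - 1)‼ : ℝ) ≠ 0 := by positivity
  push_cast
  field_simp
  rw [← mul_pow]
  norm_num

theorem hasSum_He_zero_mul_pow_div_factorial (u : ℝ) :
    HasSum (fun n ↦ He n 0 * u ^ n / n !) (Real.exp (-u ^ 2 / 2)) := by
  rw [← add_zero (Real.exp _)]
  refine HasSum.even_add_odd ?_ ?_
  · have h : (fun m ↦ He (2 * m) 0 * u ^ (2 * m) / (2 * m)!) = fun m ↦ (-u ^ 2 / 2) ^ m / m ! := by
      ext m
      rw [mul_div_right_comm, He_two_mul_zero_div_factorial, pow_mul]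
      ring
    rw [h, Real.exp_eq_exp_ℝ]
    exact NormedSpace.expSeries_div_hasSum_exp _
  · simpa only [He_zero_of_odd (odd_two_mul_add_one _), zero_mul, zero_div] using hasSum_zero

theorem summable_abs_He_zero_mul_pow_div_factorial (r : ℝ) :
    Summable fun n ↦ |He n 0| * r ^ n / n ! := by
  refine Summable.even_add_odd ?_ ?_
  · refine (Real.summable_pow_div_factorial (r ^ 2 / 2)).congr fun m ↦ ?_
    rw [mul_div_right_comm, ← abs_of_pos (a := ((2 * m)! : ℝ)) (by positivity), ← abs_div,
      He_two_mul_zero_div_factorial, pow_mul]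
    simp only [abs_div, abs_pow, abs_neg, abs_one, Nat.abs_cast, abs_two]
    ring
  · simpa only [He_zero_of_odd (odd_two_mul_add_one _), abs_zero, zero_mul, zero_div]
      using summable_zero

theorem gaussian_kernel_vandermonde_expansion (x y : ℝ) :
    (∀ β : ℕ, Summable (fun α : ℕ => |(-x) ^ α / (α.factorial : ℝ) * He (α + β) 0|)) ∧
    Summable (fun β : ℕ =>
      |y ^ β / (β.factorial : ℝ) * ∑' α : ℕ, (-x) ^ α / (α.factorial : ℝ) * He (α + β) 0|) ∧
    HasSum (fun β : ℕ =>
        y ^ β / (β.factorial : ℝ) * ∑' α : ℕ, (-x) ^ α / (α.factorial : ℝ) * He (α + β) 0)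
      (Real.exp (-(x - y) ^ 2 / 2)) := by
  have hc r := summable_abs_He_zero_mul_pow_div_factorial r
  have hinner : ∀ β, Summable fun α ↦ |(-x) ^ α / α ! * He (α + β) 0| :=
    summable_abs_pow_div_factorial_mul_shift (c := (He · 0)) (hc _)
  have hF : Summable fun p ↦ ‖doubleTaylorTerm (He · 0) y (-x) p‖ :=
    summable_abs_doubleTaylorTerm (hc _)
  have hfiber β : ∑' α, doubleTaylorTerm (He · 0) y (-x) (β, α) =
      y ^ β / β ! * ∑' α : ℕ, (-x) ^ α / α ! * He (α + β) 0 := by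
    simp only [doubleTaylorTerm]
    exact tsum_mul_left
  have hs : HasSum (fun n ↦ He n 0 * (y + -x) ^ n / n !) (Real.exp (-(x - y) ^ 2 / 2)) := by
    rw [show -(x - y) ^ 2 / 2 = -(y + -x) ^ 2 / 2 by ring]
    exact hasSum_He_zero_mul_pow_div_factorial _
  refine ⟨hinner, ?_, ?_⟩
  · simpa only [Real.norm_eq_abs, hfiber] using summable_norm_tsum_prod hF
  · refine (hasSum_doubleTaylorTerm (hc _) hs).prod_fiberwise fun β ↦ ?_
    rw [← hfiber]
    exact (summable_norm_iff.mp hF).prod_factor β |>.hasSum
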